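/- Let x_1,...,x_N be distinct, p(x) = p_0 x^n + ... of degree n with simple zeros, E ≥ 2, n < N − 2E. Suppose y_j ≠ 0 for all j, y_j = p(x_j) for j outside a set {e_1,...,e_E} of distinct indices, and ŷ_{e_s} := p(x_{e_s}) ≠ y_{e_s}, ŷ_{e_s} ≠ 0. Define τ_k = ∑_{j=1}^N y_j x_j^k / W'(x_j). Then 𝓗_E(x;{τ}) ≡ (∏_{s=1}^E (y_{e_s} − ŷ_{e_s}) · ∏_{1≤s<t≤E} (x_{e_t} − x_{e_s})^2 / ∏_{s=1}^E W'(x_{e_s})) · ∏_{s=1}^E (x − x_{e_s}). -/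

import Mathlib

open Finset Polynomial

/-- `Wd x j = ∏_{i ≠ j} (x j - x i)`, i.e. `W'(x_j)` where `W(x) = ∏ (x - x_i)`. -/
noncomputable def Wd {N : ℕ} (x : Fin N → ℂ) (j : Fin N) : ℂ :=
  ∏ i ∈ Finset.univ.erase j, (x j - x i)

/-- The `k`-th Hankel determinant of the sequence `{c_j}`. -/
noncomputable def Hdet (c : ℕ → ℂ) (k : ℕ) : ℂ :=
  Matrix.det (Matrix.of fun i j : Fin k => c ((i : ℕ) + (j : ℕ)))

/-- The `k`-th Hankel polynomial of the sequence `{c_j}`: the determinant of the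
`(k+1)×(k+1)` matrix whose first `k` rows are `(c_{i}, …, c_{i+k})` and whose
last row is `(1, x, …, x^k)`. -/
noncomputable def Hpoly (c : ℕ → ℂ) (k : ℕ) : Polynomial ℂ :=
  Matrix.det (Matrix.of fun i j : Fin (k + 1) =>
    if (i : ℕ) < k then Polynomial.C (c ((i : ℕ) + (j : ℕ))) else Polynomial.X ^ (j : ℕ))

open scoped Matrix

/-! Since `∑_j q(x_j) / W'(x_j)` is the coefficient of degree `N - 1` of the Lagrange interpolant
of `q`, it vanishes when `deg q < N - 1`. Applied to `q = p X^k`, this shows that for `k < 2E`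
only the errors contribute to the moments: `τ_k = ∑_s λ_s z_s^k` with `z_s = x_{e_s}` and
`λ_s = (y_{e_s} - p(x_{e_s})) / W'(x_{e_s})`. For such a sequence the Hankel matrix with the row
`(1, x, …, x^E)` appended is the product of the block matrix `[(λ_s z_s^i)_{i,s}, 0; 0, 1]` and the
Vandermonde matrix of `(z_1, …, z_E, x)`, and the two determinants give the claimed product. -/

theorem Fin.prod_Ioi_castSucc {M : Type*} [CommMonoid M] {n : ℕ} (f : Fin (n + 1) → M)
    (i : Fin n) : ∏ j ∈ Ioi i.castSucc, f j = (∏ j ∈ Ioi i, f j.castSucc) * f (Fin.last n) := by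
  simp only [← filter_lt_eq_Ioi, prod_filter, Fin.prod_univ_castSucc,
    Fin.castSucc_lt_castSucc_iff, Fin.castSucc_lt_last, if_true]

theorem Matrix.det_vandermonde_snoc {R : Type*} [CommRing R] {n : ℕ} (v : Fin n → R) (a : R) :
    (vandermonde (Fin.snoc v a : Fin (n + 1) → R)).det = (vandermonde v).det * ∏ i, (a - v i) := by
  have hlast : Ioi (Fin.last n) = ∅ := Ioi_eq_empty.mpr fun b _ => Fin.le_last b
  simp only [det_vandermonde, Fin.prod_univ_castSucc, hlast, prod_empty, mul_one,
    Fin.prod_Ioi_castSucc, Fin.snoc_castSucc, Fin.snoc_last, prod_mul_distrib]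

theorem Matrix.det_snoc_single_last {R : Type*} [CommRing R] {n : ℕ} (A : Matrix (Fin n) (Fin n) R) :
    (Matrix.of (Fin.snoc (fun i => Fin.snoc (A i) 0) (Pi.single (Fin.last n) 1)) :
      Matrix (Fin (n + 1)) (Fin (n + 1)) R).det = A.det := by
  set B : Matrix (Fin (n + 1)) (Fin (n + 1)) R :=
    Matrix.of (Fin.snoc (fun i => Fin.snoc (A i) 0) (Pi.single (Fin.last n) 1))
  have hsub : B.submatrix Fin.castSucc Fin.castSucc = A := by
    ext i j
    simp [B]
  rw [det_succ_row B (Fin.last n), Fin.sum_univ_castSucc]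
  simp [B, Fin.castSucc_ne_last, hsub]

theorem Hpoly_eq_of_moments {E : ℕ} (c : ℕ → ℂ) (lam z : Fin E → ℂ)
    (hc : ∀ k < 2 * E, c k = ∑ s, lam s * z s ^ k) :
    Hpoly c E = C ((∏ s, lam s) * (∏ s, ∏ u ∈ Ioi s, (z u - z s)) ^ 2) * ∏ s, (X - C (z s)) := by
  set W : Matrix (Fin E) (Fin E) ℂ[X] := Matrix.of fun i s => C (lam s * z s ^ (i : ℕ))
  have hfactor : (Matrix.of fun i j : Fin (E + 1) =>
      if (i : ℕ) < E then C (c ((i : ℕ) + (j : ℕ))) else X ^ (j : ℕ)) =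
      Matrix.of (Fin.snoc (fun i => Fin.snoc (W i) 0) (Pi.single (Fin.last E) 1)) *
        Matrix.vandermonde (Fin.snoc (fun s => C (z s)) X : Fin (E + 1) → ℂ[X]) := by
    ext i j
    induction i using Fin.lastCases with
    | last => simp [Matrix.mul_apply, Fin.sum_univ_castSucc, Fin.castSucc_ne_last]
    | cast i =>
      simp [Matrix.mul_apply, Fin.sum_univ_castSucc, W, hc _ (by omega : (i : ℕ) + j < 2 * E),
        pow_add, mul_assoc]
  have hW : W = (Matrix.vandermonde fun s => C (z s))ᵀ * Matrix.diagonal fun s => C (lam s) := by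
    ext i s
    simp [W, mul_comm]
  rw [Hpoly, hfactor, Matrix.det_mul, Matrix.det_snoc_single_last, Matrix.det_vandermonde_snoc, hW,
    Matrix.det_mul, Matrix.det_transpose, Matrix.det_diagonal]
  simp only [Matrix.det_vandermonde, map_mul, map_pow, map_prod, map_sub]
  ring

theorem sum_eval_div_Wd_eq_zero {N : ℕ} {x : Fin N → ℂ} (hx : Function.Injective x) {q : ℂ[X]}
    (hq : q.degree < (N - 1 : ℕ)) : ∑ j, q.eval (x j) / Wd x j = 0 := by
  have hcoeff := Lagrange.coeff_eq_sum (s := univ) hx.injOn (P := q)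
    (by simpa using hq.trans_le (by exact_mod_cast N.sub_le 1))
  rwa [card_univ, Fintype.card_fin, coeff_eq_zero_of_degree_lt hq, eq_comm] at hcoeff

theorem sum_mul_pow_div_Wd_eq_sum_errors {N E : ℕ} {x : Fin N → ℂ} (hx : Function.Injective x)
    {p : ℂ[X]} {e : Fin E → Fin N} (he : Function.Injective e) {y : Fin N → ℂ}
    (hy : ∀ j, (∀ s, j ≠ e s) → y j = p.eval (x j)) {k : ℕ} (hk : p.natDegree + k + 1 < N) :
    ∑ j, y j * x j ^ k / Wd x j =
      ∑ s, (y (e s) - p.eval (x (e s))) / Wd x (e s) * x (e s) ^ k := by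
  have hsplit : ∀ j, y j * x j ^ k / Wd x j =
      (y j - p.eval (x j)) * x j ^ k / Wd x j + (p * X ^ k).eval (x j) / Wd x j := by
    intro j
    simp only [eval_mul, eval_pow, eval_X]
    ring
  have hdeg : (p * X ^ k).degree < ((N - 1 : ℕ) : WithBot ℕ) := by
    have : (p * X ^ k).natDegree ≤ p.natDegree + k := natDegree_mul_le.trans (by simp)
    exact (degree_le_natDegree.trans (Nat.cast_le.mpr this)).trans_lt (Nat.cast_lt.mpr (by omega))
  have hsupport : ∀ j ∉ univ.map ⟨e, he⟩, (y j - p.eval (x j)) * x j ^ k / Wd x j = 0 := by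
    intro j hj
    rw [hy j fun s hs => hj (mem_map.mpr ⟨s, mem_univ s, hs.symm⟩), sub_self, zero_mul, zero_div]
  rw [sum_congr rfl fun j _ => hsplit j, sum_add_distrib, sum_eval_div_Wd_eq_zero hx hdeg, add_zero,
    ← sum_subset (subset_univ _) fun j _ hj => hsupport j hj, sum_map]
  exact sum_congr rfl fun s _ => by simp only [Function.Embedding.coeFn_mk]; ring

theorem hankel_poly_E_error_locator_general (N n E : ℕ) (hn : n < N - 2 * E)
    (x : Fin N → ℂ) (hx : Function.Injective x)
    (p : Polynomial ℂ) (hpdeg : p.natDegree = n)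
    (e : Fin E → Fin N) (he : Function.Injective e)
    (y : Fin N → ℂ)
    (hy : ∀ j, (∀ s, j ≠ e s) → y j = p.eval (x j))
    (t : ℕ → ℂ) (ht : ∀ k, t k = ∑ j, y j * x j ^ k / Wd x j) :
    Hpoly t E =
      C (((∏ s, (y (e s) - p.eval (x (e s)))) *
            ∏ s, ∏ u ∈ Finset.univ.filter (fun u => s < u),
              (x (e u) - x (e s)) ^ 2) /
          ∏ s, Wd x (e s)) *
        ∏ s, (X - C (x (e s))) := by
  have hmoments : ∀ k < 2 * E, t k =
      ∑ s, (y (e s) - p.eval (x (e s))) / Wd x (e s) * x (e s) ^ k := fun k hk =>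
    (ht k).trans (sum_mul_pow_div_Wd_eq_sum_errors hx he hy (by omega))
  rw [Hpoly_eq_of_moments t _ _ hmoments]
  congr 2
  simp only [filter_lt_eq_Ioi, prod_pow, prod_div_distrib]
  ring

theorem hankel_poly_E_error_locator (N n E : ℕ) (hE : 2 ≤ E) (hn : n < N - 2 * E)
    (x : Fin N → ℂ) (hx : Function.Injective x)
    (p : Polynomial ℂ) (hpdeg : p.natDegree = n) (hp0 : p.leadingCoeff ≠ 0)
    (hsimple : p.roots.Nodup)
    (e : Fin E → Fin N) (he : Function.Injective e)
    (y : Fin N → ℂ) (hy0 : ∀ j, y j ≠ 0)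
    (hy : ∀ j, (∀ s, j ≠ e s) → y j = p.eval (x j))
    (herr : ∀ s, p.eval (x (e s)) ≠ y (e s)) (herr0 : ∀ s, p.eval (x (e s)) ≠ 0)
    (t : ℕ → ℂ) (ht : ∀ k, t k = ∑ j, y j * x j ^ k / Wd x j) :
    Hpoly t E =
      C (((∏ s, (y (e s) - p.eval (x (e s)))) *
            ∏ s, ∏ u ∈ Finset.univ.filter (fun u => s < u),
              (x (e u) - x (e s)) ^ 2) /
          ∏ s, Wd x (e s)) *
        ∏ s, (X - C (x (e s))) :=
  hankel_poly_E_error_locator_general N n E hn x hx p hpdeg e he y hy t ht
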